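/- Suppose h: ℝ^q → ℝ is defined from a parameterized autocovariance γ·(θ) and the map θ ↦ (γ_{k₁}(θ),…,γ_{k_m}(θ)) is injective on the parameter space Θ. If the collection of lags selected in the composite likelihood includes k₁,…,k_m, then θ₀ is the unique maximizer of θ ↦ E_{θ₀}[∑_j log f_{k_j}(Y^{k_j}; θ)], where f_{k_j} is the Gaussian density of the subvector of Y indexed by the tuple k_j. -/

import Mathlib

/-!
For positive definite `A` and `S`, the substitution `y = S^{1/2} x` turns the density `f_S`
into the standard normal density, whose second moments give
`E_S[log f_A] = -(n/2) log 2π - (log det A + tr (A⁻¹ S)) / 2`.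
With `C = S^{1/2} A⁻¹ S^{1/2}` this yields
`E_S[log f_S] - E_S[log f_A] = (tr C - n - log det C) / 2 = Σ (λ - 1 - log λ) / 2`
over the eigenvalues `λ` of `C`, which is positive unless `C = 1`, i.e. `A = S`.
For `θ ≠ θ₀` identifiability makes some covariance matrix differ from the one at `θ₀`,
so that summand is strictly smaller and the others are not larger.
-/

open MeasureTheory Matrix

noncomputable def mvGaussianPdf {q : ℕ} (S : Matrix (Fin q) (Fin q) ℝ)
    (y : Fin q → ℝ) : ℝ :=
  (2 * Real.pi) ^ (-(q : ℝ) / 2) * S.det ^ (-(1 : ℝ) / 2) *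
    Real.exp (-(1 / 2) * (y ⬝ᵥ (S⁻¹ *ᵥ y)))

open ProbabilityTheory Real
open scoped MatrixOrder

section StandardNormal

lemma gaussianPDFReal_zero_one (t : ℝ) :
    gaussianPDFReal 0 1 t = (√(2 * π))⁻¹ * exp (-(1 / 2) * t ^ 2) := by
  simp [gaussianPDFReal, div_eq_inv_mul]

lemma integral_mul_gaussianPDFReal_zero_one : ∫ t, t * gaussianPDFReal 0 1 t = 0 := by
  simpa [integral_gaussianReal_eq_integral_smul, mul_comm] using
    integral_id_gaussianReal (μ := 0) (v := 1)

lemma integral_sq_mul_gaussianPDFReal_zero_one : ∫ t, t ^ 2 * gaussianPDFReal 0 1 t = 1 := by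
  have := variance_fun_id_gaussianReal (μ := 0) (v := 1)
  rw [variance_eq_integral measurable_id'.aemeasurable, integral_id_gaussianReal] at this
  simpa [integral_gaussianReal_eq_integral_smul, mul_comm] using this

lemma integrable_pow_mul_gaussianPDFReal_zero_one (k : ℕ) :
    Integrable fun t => t ^ k * gaussianPDFReal 0 1 t := by
  have := (integrable_rpow_mul_exp_neg_mul_sq (b := 1 / 2) (by norm_num) (s := k)
    (by linarith [k.cast_nonneg (α := ℝ)])).const_mul (√(2 * π))⁻¹
  simp_rw [gaussianPDFReal_zero_one, rpow_natCast] at *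
  convert this using 2; ring

variable {ι : Type*} [Fintype ι]

noncomputable def stdGaussianPdf (x : ι → ℝ) : ℝ := ∏ i, gaussianPDFReal 0 1 (x i)

lemma integral_stdGaussianPdf : ∫ x : ι → ℝ, stdGaussianPdf x = 1 := by
  simp [stdGaussianPdf, integral_fintype_prod_volume_eq_prod,
    integral_gaussianPDFReal_eq_one _ one_ne_zero]

lemma integrable_stdGaussianPdf : Integrable fun x : ι → ℝ => stdGaussianPdf x := by
  simpa only [stdGaussianPdf, volume_pi] using
    Integrable.fintype_prod (f := fun _ : ι => gaussianPDFReal 0 1) fun _ =>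
      integrable_gaussianPDFReal 0 1

variable [DecidableEq ι]

-- `x i * x j` is the monomial with exponent `[l = i] + [l = j]` in coordinate `l`, so by Fubini
-- the second moments split into one-dimensional moments of order at most two.
lemma mul_mul_stdGaussianPdf_eq_prod (i j : ι) (x : ι → ℝ) :
    x i * x j * stdGaussianPdf x =
      ∏ l, x l ^ ((if l = i then 1 else 0) + (if l = j then 1 else 0)) *
        gaussianPDFReal 0 1 (x l) := by
  rw [stdGaussianPdf, Finset.prod_mul_distrib]
  simp only [pow_add, Finset.prod_mul_distrib, pow_ite, pow_one, pow_zero, Finset.prod_ite_eq',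
    Finset.mem_univ, if_true]

lemma integrable_mul_mul_stdGaussianPdf (i j : ι) :
    Integrable fun x : ι → ℝ => x i * x j * stdGaussianPdf x := by
  simp_rw [mul_mul_stdGaussianPdf_eq_prod i j]
  exact Integrable.fintype_prod fun l => integrable_pow_mul_gaussianPDFReal_zero_one _

lemma integral_mul_mul_stdGaussianPdf (i j : ι) :
    ∫ x : ι → ℝ, x i * x j * stdGaussianPdf x = if i = j then 1 else 0 := by
  simp_rw [mul_mul_stdGaussianPdf_eq_prod i j]
  rw [integral_fintype_prod_volume_eq_prod (fun l t =>
    t ^ ((if l = i then 1 else 0) + (if l = j then 1 else 0)) * gaussianPDFReal 0 1 t)]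
  split_ifs with hij
  · subst hij
    refine Finset.prod_eq_one fun l _ => ?_
    by_cases hl : l = i
    · simp [hl, integral_sq_mul_gaussianPDFReal_zero_one]
    · simp [hl, integral_gaussianPDFReal_eq_one]
  · refine Finset.prod_eq_zero (Finset.mem_univ i) ?_
    simp [hij, integral_mul_gaussianPDFReal_zero_one]

omit [DecidableEq ι] in
lemma dotProduct_mulVec_mul_eq_sum (M : Matrix ι ι ℝ) (g : (ι → ℝ) → ℝ)
    (x : ι → ℝ) :
    x ⬝ᵥ (M *ᵥ x) * g x = ∑ i, ∑ j, M i j * (x i * x j * g x) := by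
  simp only [dotProduct, mulVec, Finset.sum_mul, Finset.mul_sum]
  exact Finset.sum_congr rfl fun i _ => Finset.sum_congr rfl fun j _ => by ring

lemma integrable_dotProduct_mulVec_mul_stdGaussianPdf (M : Matrix ι ι ℝ) :
    Integrable fun x : ι → ℝ => x ⬝ᵥ (M *ᵥ x) * stdGaussianPdf x := by
  simp_rw [dotProduct_mulVec_mul_eq_sum]
  exact integrable_finsetSum _ fun i _ => integrable_finsetSum _ fun j _ =>
    (integrable_mul_mul_stdGaussianPdf i j).const_mul _

lemma integral_dotProduct_mulVec_mul_stdGaussianPdf (M : Matrix ι ι ℝ) :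
    ∫ x : ι → ℝ, x ⬝ᵥ (M *ᵥ x) * stdGaussianPdf x = M.trace := by
  simp_rw [dotProduct_mulVec_mul_eq_sum]
  rw [integral_finsetSum _ fun i _ => integrable_finsetSum _ fun j _ =>
    (integrable_mul_mul_stdGaussianPdf i j).const_mul (M i j)]
  refine Finset.sum_congr rfl fun i _ => ?_
  rw [integral_finsetSum _ fun j _ => (integrable_mul_mul_stdGaussianPdf i j).const_mul (M i j)]
  simp [integral_const_mul, integral_mul_mul_stdGaussianPdf]

end StandardNormal

section ChangeOfVariables

variable {ι : Type*} [Fintype ι] [DecidableEq ι] {M : Matrix ι ι ℝ}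

lemma measurableEmbedding_mulVec (hM : IsUnit M) : MeasurableEmbedding (M *ᵥ ·) :=
  (LinearMap.isClosedEmbedding_of_injective (f := toLin' M)
    (LinearMap.ker_eq_bot.2 (mulVec_injective_of_isUnit hM))).measurableEmbedding

lemma map_mulVec_volume (hM : IsUnit M) :
    Measure.map (M *ᵥ ·) volume =
      ENNReal.ofReal |M.det|⁻¹ • (volume : Measure (ι → ℝ)) := by
  have := Real.map_matrix_volume_pi_eq_smul_volume_pi ((isUnit_iff_isUnit_det M).1 hM).ne_zero
  rwa [toLin'_apply', abs_inv] at this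

lemma integral_comp_mulVec (hM : IsUnit M) (f : (ι → ℝ) → ℝ) :
    ∫ x, f (M *ᵥ x) = |M.det|⁻¹ * ∫ y, f y := by
  rw [← (measurableEmbedding_mulVec hM).integral_map, map_mulVec_volume hM,
    integral_smul_measure, ENNReal.toReal_ofReal (by positivity), smul_eq_mul]

lemma integrable_comp_mulVec_iff (hM : IsUnit M) {f : (ι → ℝ) → ℝ} :
    Integrable (fun x => f (M *ᵥ x)) ↔ Integrable f := by
  rw [← Function.comp_def, ← (measurableEmbedding_mulVec hM).integrable_map_iff,
    map_mulVec_volume hM, integrable_smul_measure]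
  · simpa using ((isUnit_iff_isUnit_det M).1 hM).ne_zero
  · exact ENNReal.ofReal_ne_top

end ChangeOfVariables

section MatrixSqrt

variable {ι : Type*} [Fintype ι] [DecidableEq ι]

omit [DecidableEq ι] in
lemma Matrix.dotProduct_mulVec_mulVec (M A : Matrix ι ι ℝ) (x : ι → ℝ) :
    (M *ᵥ x) ⬝ᵥ (A *ᵥ (M *ᵥ x)) = x ⬝ᵥ ((Mᵀ * A * M) *ᵥ x) := by
  rw [mulVec_mulVec, dotProduct_mulVec (M *ᵥ x), ← vecMul_transpose, vecMul_vecMul,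
    dotProduct_mulVec x, Matrix.mul_assoc]

lemma Matrix.transpose_cfcSqrt (S : Matrix ι ι ℝ) : (CFC.sqrt S)ᵀ = CFC.sqrt S :=
  (CFC.sqrt_nonneg S).posSemidef.1

namespace Matrix.PosDef

variable {S : Matrix ι ι ℝ}

lemma sqrt_mul_sqrt (hS : S.PosDef) : CFC.sqrt S * CFC.sqrt S = S :=
  CFC.sqrt_mul_sqrt_self S hS.posSemidef.nonneg

lemma det_sqrt (hS : S.PosDef) : (CFC.sqrt S).det = √S.det := by
  simpa using hS.posSemidef.det_sqrt

lemma isUnit_sqrt (hS : S.PosDef) : IsUnit (CFC.sqrt S) := by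
  rw [isUnit_iff_isUnit_det, hS.det_sqrt]
  exact (sqrt_pos.2 hS.det_pos).ne'.isUnit

lemma sqrt_mul_inv_mul_sqrt (hS : S.PosDef) : CFC.sqrt S * S⁻¹ * CFC.sqrt S = 1 := by
  have hB := (isUnit_iff_isUnit_det _).1 hS.isUnit_sqrt
  have hinv : S⁻¹ = (CFC.sqrt S)⁻¹ * (CFC.sqrt S)⁻¹ := by
    rw [← Matrix.mul_inv_rev, hS.sqrt_mul_sqrt]
  rw [hinv, ← Matrix.mul_assoc, mul_nonsing_inv _ hB, Matrix.one_mul, nonsing_inv_mul _ hB]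

end Matrix.PosDef

end MatrixSqrt

section GaussianDensity

variable {n : ℕ} {S : Matrix (Fin n) (Fin n) ℝ}

lemma mvGaussianPdf_sqrt_mulVec (hS : S.PosDef) (x : Fin n → ℝ) :
    mvGaussianPdf S (CFC.sqrt S *ᵥ x) = (√S.det)⁻¹ * stdGaussianPdf x := by
  have h2π : 0 ≤ 2 * π := by positivity
  rw [mvGaussianPdf, dotProduct_mulVec_mulVec, transpose_cfcSqrt, hS.sqrt_mul_inv_mul_sqrt,
    one_mulVec, stdGaussianPdf]
  simp only [gaussianPDFReal_zero_one, Finset.prod_mul_distrib, Finset.prod_const,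
    Finset.card_univ, Fintype.card_fin, ← exp_sum, dotProduct, Finset.mul_sum, sq]
  rw [sqrt_eq_rpow, sqrt_eq_rpow, ← rpow_neg hS.det_pos.le, ← rpow_neg h2π,
    ← rpow_natCast, ← rpow_mul h2π]
  ring_nf

lemma integral_mul_mvGaussianPdf (hS : S.PosDef) (f : (Fin n → ℝ) → ℝ) :
    ∫ y, f y * mvGaussianPdf S y = ∫ x, f (CFC.sqrt S *ᵥ x) * stdGaussianPdf x := by
  have h := integral_comp_mulVec hS.isUnit_sqrt fun y => f y * mvGaussianPdf S y
  simp only [mvGaussianPdf_sqrt_mulVec hS, mul_left_comm _ (√S.det)⁻¹, integral_const_mul,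
    hS.det_sqrt, abs_of_nonneg (sqrt_nonneg _)] at h
  exact (mul_left_cancel₀ (inv_ne_zero (sqrt_pos.2 hS.det_pos).ne') h).symm

lemma integrable_mul_mvGaussianPdf_iff (hS : S.PosDef) {f : (Fin n → ℝ) → ℝ} :
    Integrable (fun y => f y * mvGaussianPdf S y) ↔
      Integrable fun x => f (CFC.sqrt S *ᵥ x) * stdGaussianPdf x := by
  rw [← integrable_comp_mulVec_iff hS.isUnit_sqrt]
  simp only [mvGaussianPdf_sqrt_mulVec hS, mul_left_comm _ (√S.det)⁻¹]
  exact integrable_const_mul_iff (inv_ne_zero (sqrt_pos.2 hS.det_pos).ne').isUnit _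

lemma integral_mvGaussianPdf (hS : S.PosDef) : ∫ y, mvGaussianPdf S y = 1 := by
  simpa [integral_stdGaussianPdf] using integral_mul_mvGaussianPdf hS 1

lemma integrable_mvGaussianPdf (hS : S.PosDef) : Integrable (mvGaussianPdf S) := by
  simpa using (integrable_mul_mvGaussianPdf_iff hS (f := 1)).2
    (by simpa using integrable_stdGaussianPdf)

lemma integral_dotProduct_mulVec_mul_mvGaussianPdf (hS : S.PosDef)
    (M : Matrix (Fin n) (Fin n) ℝ) :
    ∫ y, y ⬝ᵥ (M *ᵥ y) * mvGaussianPdf S y = (M * S).trace := by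
  rw [integral_mul_mvGaussianPdf hS]
  simp only [dotProduct_mulVec_mulVec, transpose_cfcSqrt,
    integral_dotProduct_mulVec_mul_stdGaussianPdf]
  rw [trace_mul_cycle, hS.sqrt_mul_sqrt, trace_mul_comm]

lemma integrable_dotProduct_mulVec_mul_mvGaussianPdf (hS : S.PosDef)
    (M : Matrix (Fin n) (Fin n) ℝ) :
    Integrable fun y => y ⬝ᵥ (M *ᵥ y) * mvGaussianPdf S y := by
  rw [integrable_mul_mvGaussianPdf_iff hS]
  simp only [dotProduct_mulVec_mulVec, transpose_cfcSqrt]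
  exact integrable_dotProduct_mulVec_mul_stdGaussianPdf _

end GaussianDensity

namespace Matrix.PosDef

variable {ι : Type*} [Fintype ι] [DecidableEq ι]

lemma log_det_lt_trace_sub_card {C : Matrix ι ι ℝ} (hC : C.PosDef) (hC1 : C ≠ 1) :
    log C.det < C.trace - Fintype.card ι := by
  have hpos := hC.eigenvalues_pos
  obtain ⟨i, hi⟩ : ∃ i, hC.1.eigenvalues i ≠ 1 := by
    by_contra! h
    refine hC1 ?_
    have hdiag : (RCLike.ofReal ∘ hC.1.eigenvalues : ι → ℝ) = fun _ => 1 :=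
      funext fun i => by simp [h i]
    rw [hC.1.spectral_theorem, hdiag, diagonal_one, map_one]
  rw [hC.1.det_eq_prod_eigenvalues, hC.1.trace_eq_sum_eigenvalues, Fintype.card_eq_sum_ones]
  simp only [RCLike.ofReal_real_eq_id, id, Nat.cast_sum, Nat.cast_one, ← Finset.sum_sub_distrib]
  rw [log_prod fun j _ => (hpos j).ne']
  exact Finset.sum_lt_sum (fun j _ => log_le_sub_one_of_pos (hpos j))
    ⟨i, Finset.mem_univ i, log_lt_sub_one_of_pos (hpos i) hi⟩

lemma log_det_add_card_lt_log_det_add_trace {A S : Matrix ι ι ℝ} (hA : A.PosDef)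
    (hS : S.PosDef) (hne : A ≠ S) :
    log S.det + Fintype.card ι < log A.det + (A⁻¹ * S).trace := by
  set B := CFC.sqrt S
  have hB : IsUnit B := hS.isUnit_sqrt
  have hBT : Bᵀ = B := transpose_cfcSqrt S
  have hC : (B * A⁻¹ * B).PosDef := by
    simpa [hBT] using hA.inv.conjTranspose_mul_mul_same (mulVec_injective_of_isUnit hB)
  have hC1 : B * A⁻¹ * B ≠ 1 := by
    rw [← hS.sqrt_mul_inv_mul_sqrt]
    intro h
    have hinv := hB.mul_right_cancel (hB.mul_left_cancel (by simpa [Matrix.mul_assoc] using h))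
    exact hne (by rw [← nonsing_inv_nonsing_inv A hA.det_pos.ne'.isUnit, hinv,
      nonsing_inv_nonsing_inv S hS.det_pos.ne'.isUnit])
  have hdet : (B * A⁻¹ * B).det = S.det / A.det := by
    rw [det_mul, det_mul, det_nonsing_inv, Ring.inverse_eq_inv', hS.det_sqrt,
      mul_right_comm, mul_self_sqrt hS.det_pos.le, div_eq_mul_inv]
  have htr : (B * A⁻¹ * B).trace = (A⁻¹ * S).trace := by
    rw [trace_mul_comm, ← Matrix.mul_assoc, hS.sqrt_mul_sqrt, trace_mul_comm]
  have := hC.log_det_lt_trace_sub_card hC1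
  rw [hdet, htr, log_div hS.det_pos.ne' hA.det_pos.ne'] at this
  linarith

end Matrix.PosDef

section GaussianCrossEntropy

variable {n : ℕ} {A S : Matrix (Fin n) (Fin n) ℝ}

lemma log_mvGaussianPdf (hA : A.PosDef) (y : Fin n → ℝ) :
    log (mvGaussianPdf A y) =
      -(n / 2) * log (2 * π) - (log A.det + y ⬝ᵥ (A⁻¹ *ᵥ y)) / 2 := by
  have h2π : 0 < 2 * π := by positivity
  have hdet : 0 < A.det ^ (-(1 : ℝ) / 2) := rpow_pos_of_pos hA.det_pos _
  rw [mvGaussianPdf, log_mul (mul_pos (rpow_pos_of_pos h2π _) hdet).ne' (exp_ne_zero _),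
    log_mul (rpow_pos_of_pos h2π _).ne' hdet.ne', log_exp, log_rpow h2π, log_rpow hA.det_pos]
  ring

lemma integral_log_mvGaussianPdf_mul_mvGaussianPdf (hA : A.PosDef) (hS : S.PosDef) :
    ∫ y, log (mvGaussianPdf A y) * mvGaussianPdf S y =
      -(n / 2) * log (2 * π) - (log A.det + (A⁻¹ * S).trace) / 2 := by
  have h : ∀ y, log (mvGaussianPdf A y) * mvGaussianPdf S y =
      (-(n / 2) * log (2 * π) - log A.det / 2) * mvGaussianPdf S y -
        y ⬝ᵥ (A⁻¹ *ᵥ y) * mvGaussianPdf S y / 2 := fun y => by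
    rw [log_mvGaussianPdf hA]; ring
  simp_rw [h]
  rw [integral_sub ((integrable_mvGaussianPdf hS).const_mul _)
      ((integrable_dotProduct_mulVec_mul_mvGaussianPdf hS _).div_const 2),
    integral_const_mul, integral_div, integral_mvGaussianPdf hS,
    integral_dotProduct_mulVec_mul_mvGaussianPdf hS]
  ring

lemma integral_log_mvGaussianPdf_mul_lt (hA : A.PosDef) (hS : S.PosDef) (hne : A ≠ S) :
    ∫ y, log (mvGaussianPdf A y) * mvGaussianPdf S y <
      ∫ y, log (mvGaussianPdf S y) * mvGaussianPdf S y := by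
  rw [integral_log_mvGaussianPdf_mul_mvGaussianPdf hA hS,
    integral_log_mvGaussianPdf_mul_mvGaussianPdf hS hS, nonsing_inv_mul _ hS.det_pos.ne'.isUnit,
    trace_one]
  linarith [hA.log_det_add_card_lt_log_det_add_trace hS hne, Fintype.card_fin n]

lemma integral_log_mvGaussianPdf_mul_le (hA : A.PosDef) (hS : S.PosDef) :
    ∫ y, log (mvGaussianPdf A y) * mvGaussianPdf S y ≤
      ∫ y, log (mvGaussianPdf S y) * mvGaussianPdf S y := by
  rcases eq_or_ne A S with rfl | hne
  · rfl
  · exact (integral_log_mvGaussianPdf_mul_lt hA hS hne).le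

end GaussianCrossEntropy

/-- Identification in Gaussian composite likelihood: if the selected autocovariances
`γ_{k_j(i₁) − k_j(i₂)}(θ)` (over the tuples `k_1, …, k_K` included in the composite
likelihood) determine `θ` — i.e. the map from `θ` to these covariances is injective
at `θ₀` — then `θ₀` is the unique maximizer of
`θ ↦ E_{θ₀}[∑_j log f_{k_j}(Y^{k_j}; θ)]`, where `f_{k_j}` is the Gaussian density of
the subvector indexed by the tuple `k_j`. -/
theorem stmt_17 {Θ : Type*} (γ : Θ → ℝ → ℝ) (θ₀ : Θ)
    (K : ℕ) (q : Fin K → ℕ) (k : (j : Fin K) → Fin (q j) → ℝ)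
    (hpd : ∀ θ (j : Fin K),
      (Matrix.of fun i₁ i₂ : Fin (q j) => γ θ (k j i₁ - k j i₂)).PosDef)
    (hid : ∀ θ : Θ,
      (∀ (j : Fin K) (i₁ i₂ : Fin (q j)),
        γ θ (k j i₁ - k j i₂) = γ θ₀ (k j i₁ - k j i₂)) → θ = θ₀) :
    ∀ θ : Θ, θ ≠ θ₀ →
      (∑ j : Fin K, ∫ y : Fin (q j) → ℝ,
          Real.log (mvGaussianPdf (Matrix.of fun i₁ i₂ => γ θ (k j i₁ - k j i₂)) y) *
            mvGaussianPdf (Matrix.of fun i₁ i₂ => γ θ₀ (k j i₁ - k j i₂)) y) <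
      ∑ j : Fin K, ∫ y : Fin (q j) → ℝ,
          Real.log (mvGaussianPdf (Matrix.of fun i₁ i₂ => γ θ₀ (k j i₁ - k j i₂)) y) *
            mvGaussianPdf (Matrix.of fun i₁ i₂ => γ θ₀ (k j i₁ - k j i₂)) y := by
  intro θ hθ
  obtain ⟨j₀, i₁, i₂, hne⟩ : ∃ (j : Fin K) (i₁ i₂ : Fin (q j)),
      γ θ (k j i₁ - k j i₂) ≠ γ θ₀ (k j i₁ - k j i₂) := by
    by_contra! h
    exact hθ (hid θ h)
  have hcov : (Matrix.of fun i₁ i₂ => γ θ (k j₀ i₁ - k j₀ i₂)) ≠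
      Matrix.of fun i₁ i₂ => γ θ₀ (k j₀ i₁ - k j₀ i₂) :=
    fun h => hne (by simpa using congrFun₂ h i₁ i₂)
  exact Finset.sum_lt_sum (fun j _ => integral_log_mvGaussianPdf_mul_le (hpd θ j) (hpd θ₀ j))
    ⟨j₀, Finset.mem_univ j₀,
      integral_log_mvGaussianPdf_mul_lt (hpd θ j₀) (hpd θ₀ j₀) hcov⟩
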